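/- arXiv:1509.02447 — 2 statements merged into one kernel-verified Lean document; each statement's English description precedes it below -/
import Mathlib

section
/- Under the stated assumptions, for every k ≥ 1 and every X ∈ E, the GCG iterates satisfy φ(X_k) − φ(X) ≤ 2C/(k+1), where C = max( L·(κ‖X‖_r + R)² , φ(X_1) − φ(X) ). -/
/-!
At step `k` compare the iterate with the line-search candidate
`(1 - η) X_{k-1} + η ‖Xc‖_r Z_k`, `η = 2/(k+1)`. Since `‖Xc‖_r⁻¹ Xc` is feasible for the
linearized subproblem, `‖Xc‖_r ⟪Z_k, ∇f⟫ ≤ ⟪Xc, ∇f⟫`, and convexity of `f` turns this into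
`⟪‖Xc‖_r Z_k - X_{k-1}, ∇f⟫ ≤ f Xc - f X_{k-1}`. The smoothness bound, with
`‖‖Xc‖_r Z_k - X_{k-1}‖_s ≤ κ ‖Xc‖_r + R`, then gives the recursion
`φ X_k - φ Xc ≤ (1 - η)(φ X_{k-1} - φ Xc) + η² C / 2`, and `2C/(k+1)` is a supersolution of it.
-/

open RealInnerProductSpace

theorem ConvexOn.inner_sub_le_of_hasGradientAt {E : Type*} [NormedAddCommGroup E]
    [InnerProductSpace ℝ E] [CompleteSpace E] {f : E → ℝ} {g A : E}
    (hf : ConvexOn ℝ Set.univ f) (hg : HasGradientAt f g A) (B : E) :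
    ⟪B - A, g⟫ ≤ f B - f A := by
  have hline : HasDerivAt (f ∘ AffineMap.lineMap (k := ℝ) A B) ⟪g, B - A⟫ 0 := by
    have hg' : HasFDerivAt f (InnerProductSpace.toDual ℝ E g)
        (AffineMap.lineMap (k := ℝ) A B 0) := by
      simpa using hg.hasFDerivAt
    simpa using hg'.comp_hasDerivAt 0 AffineMap.hasDerivAt_lineMap
  have hslope := (hf.comp_affineMap (AffineMap.lineMap A B)).le_slope_of_hasDerivAt
    (Set.mem_univ 0) (Set.mem_univ 1) one_pos hline
  simpa [slope_def_field, real_inner_comm] using hslope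

section GCGStep

variable {E : Type*} [NormedAddCommGroup E] [InnerProductSpace ℝ E]

theorem Seminorm.mul_inner_le_of_forall_inner_le {q : Seminorm ℝ E}
    (hq : ∀ x, q x = 0 → x = 0) {Z g : E} (hZ : ∀ W, q W ≤ 1 → ⟪Z, g⟫ ≤ ⟪W, g⟫) (x : E) :
    q x * ⟪Z, g⟫ ≤ ⟪x, g⟫ := by
  rcases (apply_nonneg q x).eq_or_lt with hx | hx
  · simp [hq x hx.symm]
  · have hW : q ((q x)⁻¹ • x) ≤ 1 := by
      rw [map_smul_eq_mul, norm_inv, Real.norm_of_nonneg hx.le, inv_mul_cancel₀ hx.ne']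
    calc q x * ⟪Z, g⟫ ≤ q x * ⟪(q x)⁻¹ • x, g⟫ := by gcongr; exact hZ _ hW
      _ = ⟪x, g⟫ := by rw [real_inner_smul_left, mul_inv_cancel_left₀ hx.ne']

theorem Seminorm.map_smul_sub_le {p : Seminorm ℝ E} {c κ R : ℝ} (hc : 0 ≤ c) {Z A : E}
    (hZ : p Z ≤ κ) (hA : p A ≤ R) : p (c • Z - A) ≤ κ * c + R :=
  calc p (c • Z - A) ≤ p (c • Z) + p A := map_sub_le_add p _ _
    _ = c * p Z + p A := by rw [map_smul_eq_mul, Real.norm_of_nonneg hc]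
    _ ≤ c * κ + R := by gcongr
    _ = κ * c + R := by ring

theorem gcg_step_gap_le [CompleteSpace E] {f φ : E → ℝ} {g : E} {p q : Seminorm ℝ E}
    {μ L κ R η : ℝ} {A Z Y Xc : E}
    (hf : ConvexOn ℝ Set.univ f) (hg : HasGradientAt f g A) (hq : ∀ x, q x = 0 → x = 0)
    (hφ : ∀ Y, φ Y = f Y + μ * q Y)
    (hsmooth : ∀ B, f ((1 - η) • A + η • B)
      ≤ f A + η * ⟪B - A, g⟫ + L * η ^ 2 / 2 * p (B - A) ^ 2)
    (hL : 0 ≤ L) (hη : 0 ≤ η) (hZκ : p Z ≤ κ) (hZ : ∀ W, q W ≤ 1 → ⟪Z, g⟫ ≤ ⟪W, g⟫)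
    (hA : p A ≤ R)
    (hY : φ Y ≤ f ((1 - η) • A + (η * q Xc) • Z) + μ * (1 - η) * q A + μ * (η * q Xc)) :
    φ Y - φ Xc ≤ (1 - η) * (φ A - φ Xc) + L * η ^ 2 / 2 * (κ * q Xc + R) ^ 2 := by
  set B := q Xc • Z
  have hlinear : ⟪B - A, g⟫ ≤ f Xc - f A :=
    calc ⟪B - A, g⟫ = q Xc * ⟪Z, g⟫ - ⟪A, g⟫ := by rw [inner_sub_left, real_inner_smul_left]
      _ ≤ ⟪Xc, g⟫ - ⟪A, g⟫ := by gcongr; exact q.mul_inner_le_of_forall_inner_le hq hZ Xc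
      _ = ⟪Xc - A, g⟫ := (inner_sub_left _ _ _).symm
      _ ≤ f Xc - f A := hf.inner_sub_le_of_hasGradientAt hg Xc
  have hdist : p (B - A) ^ 2 ≤ (κ * q Xc + R) ^ 2 := by
    gcongr
    exact p.map_smul_sub_le (apply_nonneg q Xc) hZκ hA
  have hcandidate : f ((1 - η) • A + η • B)
      ≤ f A + η * (f Xc - f A) + L * η ^ 2 / 2 * (κ * q Xc + R) ^ 2 :=
    (hsmooth B).trans (by gcongr)
  rw [← smul_smul] at hY
  rw [hφ, hφ, hφ] at *
  linarith

end GCGStep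

theorem le_two_mul_div_add_one_of_recursion {a : ℕ → ℝ} {C : ℝ} (hC : 0 ≤ C) (h1 : a 1 ≤ C)
    (hrec : ∀ j, 2 ≤ j →
      a j ≤ (1 - 2 / ((j : ℝ) + 1)) * a (j - 1) + (2 / ((j : ℝ) + 1)) ^ 2 / 2 * C)
    {k : ℕ} (hk : 1 ≤ k) : a k ≤ 2 * C / ((k : ℝ) + 1) := by
  induction k, hk using Nat.le_induction with
  | base => norm_num [h1]
  | succ n hn ih =>
    have hstep := hrec (n + 1) (by omega)
    rw [Nat.add_sub_cancel] at hstep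
    push_cast at hstep ⊢
    set m : ℝ := n + 1
    have hm : 2 ≤ m := by simp only [m]; norm_cast; omega
    have hη : 0 ≤ 1 - 2 / (m + 1) := by
      rw [sub_nonneg, div_le_one (by positivity)]; linarith
    have hgap : 2 * C / (m + 1) - ((1 - 2 / (m + 1)) * (2 * C / m) + (2 / (m + 1)) ^ 2 / 2 * C)
        = 2 * C / (m * (m + 1) ^ 2) := by
      field_simp; ring
    have hgap_nonneg : 0 ≤ 2 * C / (m * (m + 1) ^ 2) := by positivity
    calc a (n + 1) ≤ (1 - 2 / (m + 1)) * a n + (2 / (m + 1)) ^ 2 / 2 * C := hstep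
      _ ≤ (1 - 2 / (m + 1)) * (2 * C / m) + (2 / (m + 1)) ^ 2 / 2 * C := by gcongr
      _ ≤ 2 * C / (m + 1) := by linarith

theorem gcg_convergence_rate_general
    {E : Type*} [NormedAddCommGroup E] [InnerProductSpace ℝ E] [FiniteDimensional ℝ E]
    (f : E → ℝ) (f' : E → E)
    (hconv : ConvexOn ℝ Set.univ f)
    (hgrad : ∀ A : E, HasGradientAt f (f' A) A)
    -- `nr` is a norm on `E` (playing the role of the nuclear norm)
    (nr : E → ℝ)
    (hnr_def : ∀ x, nr x = 0 → x = 0)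
    (hnr_add : ∀ x y, nr (x + y) ≤ nr x + nr y)
    (hnr_smul : ∀ (c : ℝ) (x : E), nr (c • x) = |c| * nr x)
    -- `ns` is a norm on `E` (with respect to which `f` is smooth)
    (ns : E → ℝ)
    (hns_add : ∀ x y, ns (x + y) ≤ ns x + ns y)
    (hns_smul : ∀ (c : ℝ) (x : E), ns (c • x) = |c| * ns x)
    (μ L κ R : ℝ) (hL : 0 < L)
    -- the objective funtion φ
    (φ : E → ℝ) (hφ : ∀ Y, φ Y = f Y + μ * nr Y)
    -- the smoothness assumption (Assumption 1)
    (hsmooth : ∀ A B : E, ∀ η : ℝ, 0 < η → η < 1 →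
      f ((1 - η) • A + η • B) ≤ f A + η * ⟪B - A, f' A⟫ + L * η ^ 2 / 2 * ns (B - A) ^ 2)
    -- `ns` is bounded by `κ` on the `nr`-unit ball
    (hκbound : ∀ Z : E, nr Z ≤ 1 → ns Z ≤ κ)
    -- the GCG iterates
    (X : ℕ → E) (Z : ℕ → E)
    -- (i) the linearized subproblem
    (hZ_feas : ∀ k : ℕ, 1 ≤ k → nr (Z k) ≤ 1)
    (hZ_opt : ∀ k : ℕ, 1 ≤ k → ∀ W : E, nr W ≤ 1 →
      ⟪Z k, f' (X (k - 1))⟫ ≤ ⟪W, f' (X (k - 1))⟫)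
    -- (ii) the new iterate improves on the line-search upper bound `h_k`, with η_k = 2/(k+1)
    (hstep : ∀ k : ℕ, 1 ≤ k → ∀ θ : ℝ, 0 ≤ θ →
      φ (X k) ≤ f ((1 - 2 / ((k : ℝ) + 1)) • X (k - 1) + θ • Z k)
        + μ * (1 - 2 / ((k : ℝ) + 1)) * nr (X (k - 1)) + μ * θ)
    -- (iii) uniform boundedness of the iterates
    (hbound : ∀ k : ℕ, ns (X k) ≤ R)
    -- the competitor `Xc`
    (Xc : E) (k : ℕ) (hk : 1 ≤ k) :
    φ (X k) - φ Xc ≤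
      2 * max (L * (κ * nr Xc + R) ^ 2) (φ (X 1) - φ Xc) / ((k : ℝ) + 1) := by
  let q : Seminorm ℝ E := .of nr hnr_add fun c x => by rw [Real.norm_eq_abs]; exact hnr_smul c x
  let p : Seminorm ℝ E := .of ns hns_add fun c x => by rw [Real.norm_eq_abs]; exact hns_smul c x
  set C := max (L * (κ * nr Xc + R) ^ 2) (φ (X 1) - φ Xc)
  have hLC : L * (κ * nr Xc + R) ^ 2 ≤ C := le_max_left _ _
  refine le_two_mul_div_add_one_of_recursion (a := fun j => φ (X j) - φ Xc)
    ((by positivity : 0 ≤ L * (κ * nr Xc + R) ^ 2).trans hLC) (le_max_right _ _) (fun j hj => ?_) hk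
  have hj1 : 1 ≤ j := by omega
  set η : ℝ := 2 / ((j : ℝ) + 1)
  have hη0 : 0 < η := by positivity
  have hη1 : η < 1 := by
    rw [div_lt_one (by positivity)]; exact_mod_cast Nat.lt_succ_of_le hj
  have hgap : φ (X j) - φ Xc
      ≤ (1 - η) * (φ (X (j - 1)) - φ Xc) + L * η ^ 2 / 2 * (κ * nr Xc + R) ^ 2 :=
    gcg_step_gap_le (p := p) (q := q) hconv (hgrad _) hnr_def hφ
      (fun B => hsmooth _ B η hη0 hη1) hL.le hη0.le (hκbound _ (hZ_feas j hj1)) (hZ_opt j hj1)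
      (hbound _) (hstep j hj1 (η * nr Xc) (mul_nonneg hη0.le (apply_nonneg q Xc)))
  calc φ (X j) - φ Xc
      ≤ (1 - η) * (φ (X (j - 1)) - φ Xc) + η ^ 2 / 2 * (L * (κ * nr Xc + R) ^ 2) := by
        linarith
    _ ≤ _ := by gcongr

/-- **GCG convergence rate** (Theorem 1): under the smoothness assumption on `f`,
optimality of the linearized subproblem solutions `Z k`, the line-search upper-bound
property of the iterates, and uniform boundedness of the iterates, the generalized
conditional gradient iterates satisfy `φ (X k) - φ Xc ≤ 2 C / (k + 1)` with
`C = max (L * (κ * nr Xc + R)^2) (φ (X 1) - φ Xc)`. -/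
theorem gcg_convergence_rate
    {E : Type*} [NormedAddCommGroup E] [InnerProductSpace ℝ E] [FiniteDimensional ℝ E]
    (f : E → ℝ) (f' : E → E)
    (hconv : ConvexOn ℝ Set.univ f)
    (hgrad : ∀ A : E, HasGradientAt f (f' A) A)
    -- `nr` is a norm on `E` (playing the role of the nuclear norm)
    (nr : E → ℝ)
    (hnr_nonneg : ∀ x, 0 ≤ nr x)
    (hnr_def : ∀ x, nr x = 0 → x = 0)
    (hnr_add : ∀ x y, nr (x + y) ≤ nr x + nr y)
    (hnr_smul : ∀ (c : ℝ) (x : E), nr (c • x) = |c| * nr x)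
    -- `ns` is a norm on `E` (with respect to which `f` is smooth)
    (ns : E → ℝ)
    (hns_nonneg : ∀ x, 0 ≤ ns x)
    (hns_def : ∀ x, ns x = 0 → x = 0)
    (hns_add : ∀ x y, ns (x + y) ≤ ns x + ns y)
    (hns_smul : ∀ (c : ℝ) (x : E), ns (c • x) = |c| * ns x)
    (μ L κ R : ℝ) (hμ : 0 < μ) (hL : 0 < L) (hκ : 0 < κ)
    -- the objective funtion φ
    (φ : E → ℝ) (hφ : ∀ Y, φ Y = f Y + μ * nr Y)
    -- the smoothness assumption (Assumption 1)
    (hsmooth : ∀ A B : E, ∀ η : ℝ, 0 < η → η < 1 →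
      f ((1 - η) • A + η • B) ≤ f A + η * ⟪B - A, f' A⟫ + L * η ^ 2 / 2 * ns (B - A) ^ 2)
    -- `ns` is bounded by `κ` on the `nr`-unit ball
    (hκbound : ∀ Z : E, nr Z ≤ 1 → ns Z ≤ κ)
    -- the GCG iterates
    (X : ℕ → E) (Z : ℕ → E)
    -- (i) the linearized subproblem
    (hZ_feas : ∀ k : ℕ, 1 ≤ k → nr (Z k) ≤ 1)
    (hZ_opt : ∀ k : ℕ, 1 ≤ k → ∀ W : E, nr W ≤ 1 →
      ⟪Z k, f' (X (k - 1))⟫ ≤ ⟪W, f' (X (k - 1))⟫)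
    -- (ii) the new iterate improves on the line-search upper bound `h_k`, with η_k = 2/(k+1)
    (hstep : ∀ k : ℕ, 1 ≤ k → ∀ θ : ℝ, 0 ≤ θ →
      φ (X k) ≤ f ((1 - 2 / ((k : ℝ) + 1)) • X (k - 1) + θ • Z k)
        + μ * (1 - 2 / ((k : ℝ) + 1)) * nr (X (k - 1)) + μ * θ)
    -- (iii) uniform boundedness of the iterates
    (hbound : ∀ k : ℕ, ns (X k) ≤ R)
    -- the competitor `Xc`
    (Xc : E) (k : ℕ) (hk : 1 ≤ k) :
    φ (X k) - φ Xc ≤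
      2 * max (L * (κ * nr Xc + R) ^ 2) (φ (X 1) - φ Xc) / ((k : ℝ) + 1) :=
  gcg_convergence_rate_general f f' hconv hgrad nr hnr_def hnr_add hnr_smul ns hns_add hns_smul μ L
    κ R hL φ hφ hsmooth hκbound X Z hZ_feas hZ_opt hstep hbound Xc k hk
end

section
/- One-step descent inequality: fix X ∈ E, k ≥ 1 and η ∈ (0,1). Suppose Z satisfies ‖Z‖_r ≤ 1 and ⟨Z, ∇f(W)⟩ ≤ ⟨Z', ∇f(W)⟩ for all Z' with ‖Z'‖_r ≤ 1, where W = X_{k−1}, and suppose the next iterate X_k satisfies φ(X_k) ≤ f((1−η)W + θZ) + μ(1−η)‖W‖_r + μθ for every θ ≥ 0. Then φ(X_k) ≤ (1−η)φ(W) + η φ(X) + (C_k η²)/2, where C_k = L·‖ ‖X‖_r · Z − W ‖_s². -/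
open RealInnerProductSpace

/-!
Take `θ = η ‖Xc‖_r` in the line-search bound, i.e. step from `W` towards `B = ‖Xc‖_r • Z`;
the bound then already carries the regularizer part `μ (1 - η) ‖W‖_r + μ η ‖Xc‖_r`.
Smoothness bounds `f ((1 - η) W + η B)` by `f W + η ⟪B - W, ∇f W⟫` plus the quadratic term,
and since `Z` minimizes `⟪·, ∇f W⟫` over the unit ball, `⟪B, ∇f W⟫ ≤ ⟪Xc, ∇f W⟫`; the
first-order characterization of convexity then gives `⟪Xc - W, ∇f W⟫ ≤ f Xc - f W`.
-/

theorem ConvexOn.apply_sub_le_sub_of_hasFDerivAt {E : Type*} [NormedAddCommGroup E]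
    [NormedSpace ℝ E] {s : Set E} {f : E → ℝ} {f' : E →L[ℝ] ℝ} {x y : E}
    (hf : ConvexOn ℝ s f) (hx : x ∈ s) (hy : y ∈ s) (hf' : HasFDerivAt f f' x) :
    f' (y - x) ≤ f y - f x := by
  let line : ℝ →ᵃ[ℝ] E := AffineMap.lineMap x y
  have hderiv : HasDerivAt (f ∘ line) (f' (y - x)) 0 :=
    hf'.comp_hasDerivAt_of_eq 0 AffineMap.hasDerivAt_lineMap (by simp [line])
  simpa [line, slope_def_field] using
    (hf.comp_affineMap line).le_slope_of_hasDerivAt (by simpa [line] using hx)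
      (by simpa [line] using hy) one_pos hderiv

theorem HasGradientAt.inner_sub_le_of_convexOn {E : Type*} [NormedAddCommGroup E]
    [InnerProductSpace ℝ E] [CompleteSpace E] {s : Set E} {f : E → ℝ} {g x y : E}
    (hf : ConvexOn ℝ s f) (hx : x ∈ s) (hy : y ∈ s) (hg : HasGradientAt f g x) :
    ⟪y - x, g⟫ ≤ f y - f x := by
  simpa [real_inner_comm] using hf.apply_sub_le_sub_of_hasFDerivAt hx hy hg.hasFDerivAt

theorem mul_inner_le_inner_of_forall_inner_le {E : Type*} [NormedAddCommGroup E]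
    [InnerProductSpace ℝ E] {nr : E → ℝ} (hnr_nonneg : ∀ x, 0 ≤ nr x)
    (hnr_def : ∀ x, nr x = 0 → x = 0) (hnr_smul : ∀ (c : ℝ) (x : E), nr (c • x) = |c| * nr x)
    {g z : E} (hz : ∀ z' : E, nr z' ≤ 1 → ⟪z, g⟫ ≤ ⟪z', g⟫) (x : E) :
    nr x * ⟪z, g⟫ ≤ ⟪x, g⟫ := by
  rcases (hnr_nonneg x).eq_or_lt with hzero | hpos
  · rw [← hzero, zero_mul, hnr_def x hzero.symm, inner_zero_left]
  · have hunit : nr ((nr x)⁻¹ • x) ≤ 1 := by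
      rw [hnr_smul, abs_of_pos (inv_pos.mpr hpos), inv_mul_cancel₀ hpos.ne']
    simpa only [real_inner_smul_left, le_inv_mul_iff₀ hpos] using hz _ hunit

theorem gcg_one_step_descent_general
    {E : Type*} [NormedAddCommGroup E] [InnerProductSpace ℝ E] [FiniteDimensional ℝ E]
    (f : E → ℝ) (f' : E → E)
    (hconv : ConvexOn ℝ Set.univ f)
    (hgrad : ∀ A : E, HasGradientAt f (f' A) A)
    -- `nr` is a norm on `E` (playing the role of the nuclear norm)
    (nr : E → ℝ)
    (hnr_nonneg : ∀ x, 0 ≤ nr x)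
    (hnr_def : ∀ x, nr x = 0 → x = 0)
    (hnr_smul : ∀ (c : ℝ) (x : E), nr (c • x) = |c| * nr x)
    -- `ns` is a norm on `E` (with respect to which `f` is smooth)
    (ns : E → ℝ)
    (μ L : ℝ)
    -- the objective function φ
    (φ : E → ℝ) (hφ : ∀ Y, φ Y = f Y + μ * nr Y)
    -- the smoothness assumption (Assumption 1)
    (hsmooth : ∀ A B : E, ∀ η : ℝ, 0 < η → η < 1 →
      f ((1 - η) • A + η • B) ≤ f A + η * ⟪B - A, f' A⟫ + L * η ^ 2 / 2 * ns (B - A) ^ 2)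
    -- the competitor `Xc`, the current iterate `W = X_{k-1}`, the step size `η`
    (Xc W Xk Z : E) (η : ℝ) (hη0 : 0 < η) (hη1 : η < 1)
    -- `Z` solves the linearized subproblem at `W`
    (hZ_opt : ∀ Z' : E, nr Z' ≤ 1 → ⟪Z, f' W⟫ ≤ ⟪Z', f' W⟫)
    -- the next iterate `Xk` improves on the line-search upper bound
    (hstep : ∀ θ : ℝ, 0 ≤ θ →
      φ Xk ≤ f ((1 - η) • W + θ • Z) + μ * (1 - η) * nr W + μ * θ) :
    φ Xk ≤ (1 - η) * φ W + η * φ Xc + L * ns (nr Xc • Z - W) ^ 2 * η ^ 2 / 2 := by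
  have hline := hstep (η * nr Xc) (mul_nonneg hη0.le (hnr_nonneg Xc))
  rw [mul_smul] at hline
  have hlmo : ⟪nr Xc • Z, f' W⟫ ≤ ⟪Xc, f' W⟫ := by
    rw [real_inner_smul_left]
    exact mul_inner_le_inner_of_forall_inner_le hnr_nonneg hnr_def hnr_smul hZ_opt Xc
  have hfirst : ⟪Xc - W, f' W⟫ ≤ f Xc - f W :=
    (hgrad W).inner_sub_le_of_convexOn hconv trivial trivial
  have hdir : ⟪nr Xc • Z - W, f' W⟫ ≤ f Xc - f W := by
    rw [inner_sub_left] at hfirst ⊢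
    linarith
  have hquad := hsmooth W (nr Xc • Z) η hη0 hη1
  rw [hφ] at hline ⊢
  rw [hφ, hφ]
  linarith [mul_le_mul_of_nonneg_left hdir hη0.le]

/-- **One-step descent inequality** for GCG: if `Z` solves the linearized subproblem at
`W = X_{k-1}` and the next iterate `Xk` improves on the line-search upper bound, then
`φ Xk ≤ (1 - η) * φ W + η * φ Xc + Ck * η^2 / 2`, where
`Ck = L * (ns (nr Xc • Z - W))^2`. -/
theorem gcg_one_step_descent
    {E : Type*} [NormedAddCommGroup E] [InnerProductSpace ℝ E] [FiniteDimensional ℝ E]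
    (f : E → ℝ) (f' : E → E)
    (hconv : ConvexOn ℝ Set.univ f)
    (hgrad : ∀ A : E, HasGradientAt f (f' A) A)
    -- `nr` is a norm on `E` (playing the role of the nuclear norm)
    (nr : E → ℝ)
    (hnr_nonneg : ∀ x, 0 ≤ nr x)
    (hnr_def : ∀ x, nr x = 0 → x = 0)
    (hnr_add : ∀ x y, nr (x + y) ≤ nr x + nr y)
    (hnr_smul : ∀ (c : ℝ) (x : E), nr (c • x) = |c| * nr x)
    -- `ns` is a norm on `E` (with respect to which `f` is smooth)
    (ns : E → ℝ)
    (hns_nonneg : ∀ x, 0 ≤ ns x)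
    (hns_def : ∀ x, ns x = 0 → x = 0)
    (hns_add : ∀ x y, ns (x + y) ≤ ns x + ns y)
    (hns_smul : ∀ (c : ℝ) (x : E), ns (c • x) = |c| * ns x)
    (μ L : ℝ) (hμ : 0 < μ) (hL : 0 < L)
    -- the objective function φ
    (φ : E → ℝ) (hφ : ∀ Y, φ Y = f Y + μ * nr Y)
    -- the smoothness assumption (Assumption 1)
    (hsmooth : ∀ A B : E, ∀ η : ℝ, 0 < η → η < 1 →
      f ((1 - η) • A + η • B) ≤ f A + η * ⟪B - A, f' A⟫ + L * η ^ 2 / 2 * ns (B - A) ^ 2)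
    -- the competitor `Xc`, the current iterate `W = X_{k-1}`, the step size `η`
    (Xc W Xk Z : E) (η : ℝ) (hη0 : 0 < η) (hη1 : η < 1)
    -- `Z` solves the linearized subproblem at `W`
    (hZ_feas : nr Z ≤ 1)
    (hZ_opt : ∀ Z' : E, nr Z' ≤ 1 → ⟪Z, f' W⟫ ≤ ⟪Z', f' W⟫)
    -- the next iterate `Xk` improves on the line-search upper bound
    (hstep : ∀ θ : ℝ, 0 ≤ θ →
      φ Xk ≤ f ((1 - η) • W + θ • Z) + μ * (1 - η) * nr W + μ * θ) :
    φ Xk ≤ (1 - η) * φ W + η * φ Xc + L * ns (nr Xc • Z - W) ^ 2 * η ^ 2 / 2 :=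
  gcg_one_step_descent_general f f' hconv hgrad nr hnr_nonneg hnr_def hnr_smul ns μ L φ hφ hsmooth
    Xc W Xk Z η hη0 hη1 hZ_opt hstep
end
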